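/- Let D be a rich domain all of whose preferences are top-separable. Fix s ∈ M and elements a^s, b^s, c^s ∈ A^s with a^s ≠ c^s and b^s ≠ c^s. If b^s is included in every path in the graph G_≈^{A^s} connecting a^s and c^s, then every induced marginal preference Q ∈ [D]^s with top a^s ranks b^s above c^s. -/

import Mathlib

noncomputable section

universe u

/-- A (strict) preference: a complete, antisymmetric, transitive binary relation,
i.e. a strict linear order, on `α`.  `rel a b` reads "`a` is strictly preferred to `b`". -/
structure Pref (α : Type u) : Type u where
  rel : α → α → Prop
  asymm : ∀ a b, rel a b → ¬ rel b a
  trans : ∀ a b c, rel a b → rel b c → rel a c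
  total : ∀ a b, a ≠ b → rel a b ∨ rel b a

namespace Pref

variable {α : Type u}

theorem exists_top [Finite α] [Nonempty α] (P : Pref α) :
    ∃ a : α, ∀ b, b ≠ a → P.rel a b := by
  haveI : IsTrans α P.rel := ⟨P.trans⟩
  haveI : IsIrrefl α P.rel := ⟨fun a h => P.asymm a a h h⟩
  obtain ⟨a, -, ha⟩ :=
    (Finite.wellFounded_of_trans_of_irrefl P.rel).has_min Set.univ
      ⟨Classical.arbitrary α, trivial⟩
  refine ⟨a, fun b hb => ?_⟩
  rcases P.total a b (fun h => hb h.symm) with h | h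
  · exact h
  · exact absurd h (ha b trivial)

/-- The top-ranked alternative `r₁(P)` of a preference. -/
def top [Finite α] [Nonempty α] (P : Pref α) : α := P.exists_top.choose

theorem top_spec [Finite α] [Nonempty α] (P : Pref α) :
    ∀ b, b ≠ P.top → P.rel P.top b := P.exists_top.choose_spec

/-- `rank P a = k` means that `a` is the `k`-th ranked alternative `r_k(P)`. -/
def rank (P : Pref α) (a : α) : ℕ := {b | P.rel b a}.ncard + 1

/-- The induced marginal preference `[P]^s` on component `s`:
derived from `P` by referring to the off-`s` components of the top alternative. -/
def marg {m : ℕ} {A : Fin m → Type u} [∀ s, Fintype (A s)] [∀ s, Nonempty (A s)]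
    (P : Pref (∀ s, A s)) (s : Fin m) : Pref (A s) where
  rel x y := P.rel (Function.update P.top s x) (Function.update P.top s y)
  asymm _ _ h := P.asymm _ _ h
  trans _ _ _ h₁ h₂ := P.trans _ _ _ h₁ h₂
  total x y hxy := P.total _ _ fun h => hxy (by
    have := congrFun h s
    simpa using this)

end Pref

section SocialChoice

variable {m : ℕ} {A : Fin m → Type u}

/-- `a` and `b` are similar, differing exactly in component `s`: `M(a,b) = {s}`. -/
def SimilarAt (a b : ∀ s, A s) (s : Fin m) : Prop :=
  a s ≠ b s ∧ ∀ t, t ≠ s → a t = b t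

/-- The "slice" `(A^s, x^{-s})` of alternatives agreeing with `x` off component `s`. -/
def Slice (s : Fin m) (x : ∀ t, A t) : Set (∀ t, A t) :=
  {a | ∀ t, t ≠ s → a t = x t}

variable [∀ s, Fintype (A s)] [∀ s, Nonempty (A s)]

/-- The induced marginal domain `[D]^s`. -/
def margDomain (D : Set (Pref (∀ s, A s))) (s : Fin m) : Set (Pref (A s)) :=
  (fun P => Pref.marg P s) '' D

/-- A preference is minimal-richness witnessed: every alternative is some preference's top. -/
def MinimallyRich (D : Set (Pref (∀ s, A s))) : Prop :=
  ∀ a : ∀ s, A s, ∃ P ∈ D, Pref.top P = a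

/-- A separable preference. -/
def Separable (P : Pref (∀ s, A s)) : Prop :=
  ∃ Q : ∀ s, Pref (A s), ∀ (s : Fin m) (a b : ∀ t, A t),
    SimilarAt a b s → (Q s).rel (a s) (b s) → P.rel a b

/-- A top-separable preference. -/
def TopSeparable (P : Pref (∀ s, A s)) : Prop :=
  ∀ (s : Fin m) (a b : ∀ t, A t), SimilarAt a b s → a s = Pref.top P s → P.rel a b

end SocialChoice

/-- Two preferences are complete reversals. -/
def CompleteReversals {α : Type u} (P P' : Pref α) : Prop :=
  ∀ a b, P.rel a b ↔ P'.rel b a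

section SCFProps

variable {β : Type u}

/-- Unanimity of a (marginal) social choice function on domain `E`. -/
def Unanimous [Finite β] [Nonempty β] (E : Set (Pref β)) {n : ℕ}
    (f : (Fin n → E) → β) : Prop :=
  ∀ (p : Fin n → E) (a : β), (∀ i, Pref.top (p i).1 = a) → f p = a

/-- Strategy-proofness of a (marginal) social choice function on domain `E`. -/
def StrategyProof (E : Set (Pref β)) {n : ℕ} (f : (Fin n → E) → β) : Prop :=
  ∀ (p : Fin n → E) (i : Fin n) (Q : E),
    f p ≠ f (Function.update p i Q) →
    (p i).1.rel (f p) (f (Function.update p i Q))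

/-- The tops-only property. -/
def TopsOnly [Finite β] [Nonempty β] (E : Set (Pref β)) {n : ℕ}
    (f : (Fin n → E) → β) : Prop :=
  ∀ p p' : Fin n → E, (∀ i, Pref.top (p i).1 = Pref.top (p' i).1) → f p = f p'

end SCFProps

section Decomp

variable {m : ℕ} {A : Fin m → Type u} [∀ s, Fintype (A s)] [∀ s, Nonempty (A s)]

/-- The profile of induced marginal preferences `([P₁]^s, …, [Pₙ]^s)`. -/
def margProfile (D : Set (Pref (∀ s, A s))) (s : Fin m) {n : ℕ}
    (p : Fin n → D) : Fin n → (margDomain D s) :=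
  fun i => ⟨Pref.marg (p i).1 s, ⟨(p i).1, (p i).2, rfl⟩⟩

/-- `f` is decomposed by the family of marginal SCFs `g`. -/
def Decomposable (D : Set (Pref (∀ s, A s))) {n : ℕ}
    (f : (Fin n → D) → (∀ s, A s))
    (g : ∀ s : Fin m, (Fin n → (margDomain D s)) → A s) : Prop :=
  ∀ p : Fin n → D, ∀ s, f p s = g s (margProfile D s p)

/-- A decomposable domain: for every `n ≥ 2` and every SCF, being a strategy-proof
unanimous rule is equivalent to being decomposable into strategy-proof unanimous
marginal rules. -/
def DecomposableDomain (D : Set (Pref (∀ s, A s))) : Prop :=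
  ∀ n : ℕ, 2 ≤ n → ∀ f : (Fin n → D) → (∀ s, A s),
    (Unanimous D f ∧ StrategyProof D f) ↔
      ∃ g : ∀ s : Fin m, (Fin n → (margDomain D s)) → A s,
        Decomposable D f g ∧
        ∀ s, Unanimous (margDomain D s) (g s) ∧ StrategyProof (margDomain D s) (g s)

/-- Diversity⁺: `D` contains two separable preferences that are complete reversals. -/
def DiversityPlus (D : Set (Pref (∀ s, A s))) : Prop :=
  ∃ P ∈ D, ∃ P' ∈ D, Separable P ∧ Separable P' ∧ CompleteReversals P P'

end Decomp

/-- Adjacency of two preferences: they coincide except that two alternatives ranked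
consecutively in `P` occupy the same two positions in reversed order in `P'`. -/
def Adjacent {β : Type u} (P P' : Pref β) : Prop :=
  ∃ a b : β, a ≠ b ∧
    P.rank b = P.rank a + 1 ∧ P'.rank b = P.rank a ∧ P'.rank a = P.rank a + 1 ∧
    ∀ c, c ≠ a → c ≠ b → P.rank c = P'.rank c

section AdjPlus

variable {m : ℕ} {A : Fin m → Type u} [∀ s, Fintype (A s)] [∀ s, Nonempty (A s)]

/-- Adjacency⁺ of two (separable) preferences. -/
def AdjacentPlus (P P' : Pref (∀ s, A s)) : Prop :=
  Separable P ∧ Separable P' ∧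
  ∃ (s : Fin m) (a b : A s), a ≠ b ∧
    (∀ z : ∀ t, A t,
      P.rank (Function.update z s b) = P.rank (Function.update z s a) + 1 ∧
      P'.rank (Function.update z s b) = P.rank (Function.update z s a) ∧
      P'.rank (Function.update z s a) = P.rank (Function.update z s a) + 1) ∧
    ∀ c : ∀ t, A t, c s ≠ a → c s ≠ b → P.rank c = P'.rank c

/-- Edges of the graph `G_{~/~⁺}`: adjacency or adjacency⁺. -/
def AdjEdge (P P' : Pref (∀ s, A s)) : Prop :=
  Adjacent P P' ∨ AdjacentPlus P P'

end AdjPlus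

/-- A path in a graph with edge relation `edge` and vertex set `S`, connecting `x` to `y`. -/
def IsPath {β : Type u} (edge : β → β → Prop) (S : Set β) (x y : β)
    (l : List β) : Prop :=
  2 ≤ l.length ∧ l.Nodup ∧ l.head? = some x ∧ l.getLast? = some y ∧
    (∀ z ∈ l, z ∈ S) ∧ List.Chain' edge l

/-- A path of preferences has `{a,b}`-restoration if the relative ranking of `a` and `b`
flips more than once along the path. -/
def HasRestoration {β : Type u} (l : List (Pref β)) (a b : β) : Prop :=
  ∃ o p q : Fin l.length, o < p ∧ p < q ∧
    (((l.get o).rel a b ∧ (l.get p).rel b a ∧ (l.get q).rel a b) ∨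
     ((l.get o).rel b a ∧ (l.get p).rel a b ∧ (l.get q).rel b a))

section RichDom

variable {m : ℕ} {A : Fin m → Type u} [∀ s, Fintype (A s)] [∀ s, Nonempty (A s)]

/-- The Interior⁺ property. -/
def InteriorPlus (D : Set (Pref (∀ s, A s))) : Prop :=
  ∀ P ∈ D, ∀ P' ∈ D, P ≠ P' → Pref.top P = Pref.top P' →
    ∃ l : List (Pref (∀ s, A s)),
      IsPath AdjEdge D P P' l ∧ ∀ Q ∈ l, Pref.top Q = Pref.top P

/-- The Exterior⁺ property (including the no-detour condition). -/
def ExteriorPlus (D : Set (Pref (∀ s, A s))) : Prop :=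
  ∀ P ∈ D, ∀ P' ∈ D, Pref.top P ≠ Pref.top P' →
    (∀ a b : ∀ s, A s, ∃ l : List (Pref (∀ s, A s)),
        IsPath AdjEdge D P P' l ∧ ¬ HasRestoration l a b) ∧
    ∀ s : Fin m, SimilarAt (Pref.top P) (Pref.top P') s →
      ∃ l : List (Pref (∀ s, A s)),
        IsPath AdjEdge D P P' l ∧ ∀ Q ∈ l, ∀ t, t ≠ s → Pref.top Q t = Pref.top P t

/-- A rich domain: minimally rich, diversity⁺, Interior⁺ and Exterior⁺. -/
def RichDomain (D : Set (Pref (∀ s, A s))) : Prop :=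
  MinimallyRich D ∧ DiversityPlus D ∧ InteriorPlus D ∧ ExteriorPlus D

end RichDom

/-- The weak interval `⟨x,y⟩` w.r.t. a linear order. -/
def wInterval {β : Type u} (lin : LinearOrder β) (x y : β) : Set β :=
  {z | (lin.le x z ∧ lin.le z y) ∨ (lin.le y z ∧ lin.le z x)}

/-- The strict (open) interval `Int⟨x,y⟩` w.r.t. a linear order. -/
def sInterval {β : Type u} (lin : LinearOrder β) (x y : β) : Set β :=
  {z | (lin.lt x z ∧ lin.lt z y) ∨ (lin.lt y z ∧ lin.lt z x)}

/-- `x` and `y` are marginal thresholds w.r.t. `lin`. -/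
def MarginalThresholds {β : Type u} (lin : LinearOrder β) (x y : β) : Prop :=
  x = y ∨ (x ≠ y ∧ 3 ≤ (wInterval lin x y).ncard)

/-- `x` and `y` are strongly connected in the marginal domain `E`: `x ≈ y`. -/
def StronglyConnected {β : Type u} (E : Set (Pref β)) (x y : β) : Prop :=
  ∃ Q ∈ E, ∃ Q' ∈ E,
    Pref.rank Q x = 1 ∧ Pref.rank Q y = 2 ∧ Pref.rank Q' y = 1 ∧ Pref.rank Q' x = 2 ∧
    ∀ z, z ≠ x → z ≠ y → Pref.rank Q z = Pref.rank Q' z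

/-- Edges of the graph `G_≈`. -/
def scEdge {β : Type u} (E : Set (Pref β)) (x y : β) : Prop :=
  x ≠ y ∧ StronglyConnected E x y

/-- The graph with edge relation `edge` on vertex set `B` is connected. -/
def GraphConnectedOn {β : Type u} (edge : β → β → Prop) (B : Set β) : Prop :=
  ∀ x ∈ B, ∀ y ∈ B, x ≠ y → ∃ l : List β, IsPath edge B x y l

/-- `v` is a leaf of the graph with edge relation `edge` on vertex set `B`:
it has a unique neighbor. -/
def IsLeaf {β : Type u} (edge : β → β → Prop) (B : Set β) (v : β) : Prop :=
  v ∈ B ∧ ∃! w, w ∈ B ∧ edge v w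

/-- A hybrid marginal preference on `lin` w.r.t. marginal thresholds `ylo`, `yhi`. -/
def HybridPref {β : Type u} [Finite β] [Nonempty β] (lin : LinearOrder β)
    (ylo yhi : β) (Q : Pref β) : Prop :=
  ∀ a b : β, a ≠ b → a ∈ sInterval lin (Pref.top Q) b →
    a ∉ sInterval lin ylo yhi → Q.rel a b

section MDH

variable {m : ℕ} {A : Fin m → Type u} [∀ s, Fintype (A s)] [∀ s, Nonempty (A s)]

/-- `xlo` and `xhi` are thresholds: marginal thresholds on every component. -/
def Thresholds (prec : ∀ s, LinearOrder (A s)) (xlo xhi : ∀ s, A s) : Prop :=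
  ∀ s, MarginalThresholds (prec s) (xlo s) (xhi s)

/-- A multidimensional hybrid preference on `≺ = ∏ prec s` w.r.t. thresholds `xlo`, `xhi`. -/
def MDHybrid (prec : ∀ s, LinearOrder (A s)) (xlo xhi : ∀ s, A s)
    (P : Pref (∀ s, A s)) : Prop :=
  ∀ (s : Fin m) (a b : ∀ t, A t), SimilarAt a b s →
    (a s = Pref.top P s → P.rel a b) ∧
    (a s ∈ sInterval (prec s) (Pref.top P s) (b s) →
      a s ∉ sInterval (prec s) (xlo s) (xhi s) → P.rel a b)

/-- A multidimensional single-peaked preference on `≺ = ∏ prec s`. -/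
def MSP (prec : ∀ s, LinearOrder (A s)) (P : Pref (∀ s, A s)) : Prop :=
  ∀ (s : Fin m) (a b : ∀ t, A t), SimilarAt a b s →
    a s ∈ wInterval (prec s) (Pref.top P s) (b s) → P.rel a b

/-- A multidimensional hybrid domain on `≺` w.r.t. thresholds `xlo`, `xhi`. -/
def MDHybridDomain (D : Set (Pref (∀ s, A s))) (prec : ∀ s, LinearOrder (A s))
    (xlo xhi : ∀ s, A s) : Prop :=
  Thresholds prec xlo xhi ∧
  (∀ P ∈ D, MDHybrid prec xlo xhi P) ∧
  ∀ s, GraphConnectedOn (scEdge (margDomain D s)) Set.univ ∧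
    (xlo s ≠ xhi s →
      ∀ v, ¬ IsLeaf (scEdge (margDomain D s)) (wInterval (prec s) (xlo s) (xhi s)) v)

/-- Strong connectedness⁺ of two alternatives: `a ≈⁺ b`. -/
def SCPlus (D : Set (Pref (∀ s, A s))) (a b : ∀ s, A s) : Prop :=
  ∃ P ∈ D, ∃ P' ∈ D, Pref.top P = a ∧ Pref.top P' = b ∧ AdjacentPlus P P'

end MDH

/-- The outcome of the fixed-ballot formula
`max_{J ⊆ N} ( min_{i ∈ J} ( r₁(Qᵢ), b_J ) )`. -/
def fbrValue {β : Type u} (lin : LinearOrder β) {n : ℕ} [Fintype β]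
    (bal : Finset (Fin n) → β) (tops : Fin n → β) : β :=
  letI := lin
  letI : DecidableEq β := lin.toDecidableEq
  Finset.univ.sup' ⟨∅, Finset.mem_univ _⟩
    fun J : Finset (Fin n) =>
      (insert (bal J) (J.image tops)).inf' (Finset.insert_nonempty _ _) id

/-- Fixed ballots: ballot unanimity and monotonicity. -/
def FBRBallots {β : Type u} [Fintype β] [Nonempty β] (lin : LinearOrder β) {n : ℕ}
    (bal : Finset (Fin n) → β) : Prop :=
  bal ∅ = @Finset.min' β lin Finset.univ Finset.univ_nonempty ∧
  bal Finset.univ = @Finset.max' β lin Finset.univ Finset.univ_nonempty ∧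
  ∀ J J' : Finset (Fin n), J ⊂ J' → lin.le (bal J) (bal J')

/-- A fixed ballot rule (FBR) on the linear order `lin`. -/
def IsFBR {β : Type u} [Fintype β] [Nonempty β] (lin : LinearOrder β)
    (E : Set (Pref β)) {n : ℕ} (f : (Fin n → E) → β) : Prop :=
  ∃ bal : Finset (Fin n) → β, FBRBallots lin bal ∧
    ∀ p : Fin n → E, f p = fbrValue lin bal fun i => Pref.top (p i).1

/-- An `(xlo, xhi)`-FBR: an FBR that additionally satisfies the
constrained-dictatorship condition. -/
def IsConstrainedFBR {β : Type u} [Fintype β] [Nonempty β] (lin : LinearOrder β)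
    (xlo xhi : β) (E : Set (Pref β)) {n : ℕ} (f : (Fin n → E) → β) : Prop :=
  ∃ bal : Finset (Fin n) → β, FBRBallots lin bal ∧
    (∀ p : Fin n → E, f p = fbrValue lin bal fun i => Pref.top (p i).1) ∧
    ∃ i : Fin n, ∀ J : Finset (Fin n),
      (i ∈ J → lin.le xhi (bal J)) ∧ (i ∉ J → lin.le (bal J) xlo)

/-!
Suppose `Q = [P]^s` has top `a^s` but ranks `c^s` above `b^s`, and let `B`, `C` be the
alternatives obtained from `r₁(P)` by replacing its `s`-component with `b^s`, `c^s`. Exterior⁺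
connects `P` to a preference with top `C` by a path without `{B,C}`-restoration; both ends rank
`C` above `B`, so every preference on the path does, and by top-separability none of them has
`b^s` as the `s`-component of its top. Along an edge of `G_{~/~⁺}` the `s`-component of the top
of a top-separable preference either stays put or moves to a strongly connected element, so
these components trace a walk from `a^s` to `c^s` in `G_≈^{A^s}` avoiding `b^s`; shortening it
to a path contradicts the hypothesis on `b^s`.
-/

namespace Pref

variable {β : Type u}

theorem irrefl (P : Pref β) (x : β) : ¬ P.rel x x := fun h => P.asymm _ _ h h

theorem one_le_rank (P : Pref β) (x : β) : 1 ≤ P.rank x := Nat.le_add_left 1 _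

variable [Finite β]

theorem rank_lt_of_rel (P : Pref β) {x y : β} (h : P.rel x y) : P.rank x < P.rank y := by
  have hsub : {w | P.rel w x} ⊂ {w | P.rel w y} :=
    ⟨fun w hw => P.trans _ _ _ hw h, fun hsup => P.irrefl x (hsup h)⟩
  simpa [Pref.rank] using Set.ncard_lt_ncard hsub (Set.toFinite _)

theorem rel_iff_rank_lt (P : Pref β) {x y : β} : P.rel x y ↔ P.rank x < P.rank y := by
  refine ⟨P.rank_lt_of_rel, fun h => ?_⟩
  rcases P.total x y (by rintro rfl; omega) with h' | h'
  · exact h'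
  · exact absurd (P.rank_lt_of_rel h') (by omega)

theorem rank_injective (P : Pref β) : Function.Injective P.rank := by
  intro x y h
  by_contra hxy
  rcases P.total x y hxy with h' | h' <;> have := P.rank_lt_of_rel h' <;> omega

variable [Nonempty β]

theorem top_eq_of_forall_rel (P : Pref β) {x : β} (h : ∀ y, y ≠ x → P.rel x y) :
    P.top = x := by
  by_contra hne
  exact P.asymm _ _ (P.top_spec x fun h' => hne h'.symm) (h P.top hne)

theorem rank_top (P : Pref β) : P.rank P.top = 1 := by
  have hempty : {w | P.rel w P.top} = ∅ :=
    Set.eq_empty_of_forall_notMem fun w hw =>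
      P.asymm _ _ (P.top_spec w fun h => P.irrefl _ (h ▸ hw)) hw
  simp [Pref.rank, hempty]

theorem rank_eq_one_iff (P : Pref β) {x : β} : P.rank x = 1 ↔ x = P.top := by
  refine ⟨fun h => ?_, fun h => h ▸ P.rank_top⟩
  by_contra hx
  have := P.rank_lt_of_rel (P.top_spec x hx)
  rw [P.rank_top] at this
  omega

theorem rank_eq_two_iff (P : Pref β) {x : β} : P.rank x = 2 ↔ {w | P.rel w x} = {P.top} := by
  constructor
  · intro h
    obtain ⟨w, hw⟩ := Set.ncard_eq_one.mp (by simp only [Pref.rank] at h; omega :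
      {w | P.rel w x}.ncard = 1)
    have hx : x ≠ P.top := by
      rintro rfl
      rw [P.rank_top] at h
      omega
    have htop : P.top ∈ {w | P.rel w x} := P.top_spec x hx
    rw [hw, Set.mem_singleton_iff] at htop
    rw [hw, htop]
  · intro h
    simp [Pref.rank, h]

end Pref

section Marginal

variable {m : ℕ} {A : Fin m → Type u} [∀ s, Fintype (A s)] [∀ s, Nonempty (A s)]

theorem Pref.marg_top (P : Pref (∀ s, A s)) (s : Fin m) : (P.marg s).top = P.top s := by
  refine Pref.top_eq_of_forall_rel _ fun u hu => ?_
  change P.rel (Function.update P.top s (P.top s)) (Function.update P.top s u)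
  rw [Function.update_eq_self]
  exact P.top_spec _ fun h => hu (by simpa using congrFun h s)

theorem Pref.rank_marg_eq_two {P : Pref (∀ s, A s)} {s : Fin m} {y : A s}
    (h : P.rank (Function.update P.top s y) = 2) : (P.marg s).rank y = 2 := by
  rw [Pref.rank_eq_two_iff] at h ⊢
  change Function.update P.top s ⁻¹' {w | P.rel w (Function.update P.top s y)} = _
  rw [h, Pref.marg_top]
  ext v
  rw [Set.mem_preimage, Set.mem_singleton_iff, Set.mem_singleton_iff]
  exact ⟨fun hv => by simpa using congrFun hv s, fun hv => by rw [hv, Function.update_eq_self]⟩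

theorem TopSeparable.eq_update_top_of_rank_eq_two {P : Pref (∀ s, A s)} (hP : TopSeparable P)
    {y : ∀ s, A s} (h : P.rank y = 2) {s : Fin m} (hs : y s ≠ P.top s) :
    y = Function.update P.top s (y s) := by
  rw [Pref.rank_eq_two_iff] at h
  funext t
  by_cases hts : t = s
  · subst hts
    simp
  by_contra hyt
  have hup : Function.update y s (P.top s) ∈ {w | P.rel w y} :=
    hP s _ _ ⟨by simpa using hs.symm, fun r hr => by simp [hr]⟩ (by simp)
  rw [h, Set.mem_singleton_iff] at hup
  exact hyt (by simpa [hts] using congrFun hup t)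

end Marginal

theorem StronglyConnected.symm {β : Type u} {E : Set (Pref β)} {x y : β}
    (h : StronglyConnected E x y) : StronglyConnected E y x := by
  obtain ⟨Q, hQ, Q', hQ', h1, h2, h1', h2', hrest⟩ := h
  exact ⟨Q', hQ', Q, hQ, h1', h2', h1, h2, fun z hzy hzx => (hrest z hzx hzy).symm⟩

def scGraph {β : Type u} (E : Set (Pref β)) : SimpleGraph β where
  Adj := scEdge E
  symm := ⟨fun _ _ h => ⟨h.1.symm, h.2.symm⟩⟩
  loopless := ⟨fun _ h => h.1 rfl⟩

section Step

variable {m : ℕ} {A : Fin m → Type u} [∀ s, Fintype (A s)] [∀ s, Nonempty (A s)]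

theorem scEdge_of_swap_top {D : Set (Pref (∀ s, A s))} {s : Fin m} {R R' : Pref (∀ t, A t)}
    (hRD : R ∈ D) (hR'D : R' ∈ D) {y : A s} (hy : R.top s ≠ y)
    (hR'top : R'.top = Function.update R.top s y)
    (hR2 : R.rank (Function.update R.top s y) = 2) (hR'2 : R'.rank R.top = 2)
    (hrank : ∀ w : ∀ t, A t, w s ≠ R.top s → w s ≠ y → R.rank w = R'.rank w) :
    scEdge (margDomain D s) (R.top s) y := by
  set e := Function.update R.top s
  have he : e (R.top s) = R.top := Function.update_eq_self s _
  have he' : Function.update R'.top s = e := by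
    funext v
    rw [hR'top, Function.update_idem]
  have hR'top_s : R'.top s = y := by simp [hR'top, e]
  have hRe : R.top = Function.update R'.top s (R.top s) := by rw [he', he]
  refine ⟨hy, R.marg s, ⟨R, hRD, rfl⟩, R'.marg s, ⟨R', hR'D, rfl⟩, ?_, ?_, ?_, ?_, ?_⟩
  · rw [Pref.rank_eq_one_iff, Pref.marg_top]
  · exact Pref.rank_marg_eq_two hR2
  · rw [Pref.rank_eq_one_iff, Pref.marg_top, hR'top_s]
  · rw [hRe] at hR'2
    exact Pref.rank_marg_eq_two hR'2
  · intro z hzx hzy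
    have hez : R.rank (e z) = R'.rank (e z) :=
      hrank _ (by simpa [e] using hzx) (by simpa [e] using hzy)
    have hez3 : 2 < R.rank (e z) := by
      have h1 : R.rank (e z) ≠ 1 := by
        rw [Ne, Pref.rank_eq_one_iff, ← he]
        exact fun h => hzx (Function.update_injective _ s h)
      have h2 : R.rank (e z) ≠ 2 := fun h =>
        hzy (Function.update_injective _ s (R.rank_injective (h.trans hR2.symm)))
      have := R.one_le_rank (e z)
      omega
    have hR'e1 : R'.rank (e y) = 1 := by rw [Pref.rank_eq_one_iff, hR'top]
    have hR1 : R.rank (e (R.top s)) = 1 := by rw [he, R.rank_top]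
    have habove : ∀ v, R.rel (e v) (e z) ↔ R'.rel (e v) (e z) := by
      intro v
      rw [R.rel_iff_rank_lt, R'.rel_iff_rank_lt, ← hez]
      by_cases hvx : v = R.top s
      · subst hvx
        rw [hR1, he, hR'2]
        omega
      by_cases hvy : v = y
      · subst hvy
        rw [hR2, hR'e1]
        omega
      rw [hrank _ (by simpa [e] using hvx) (by simpa [e] using hvy)]
    change {v | R.rel (e v) (e z)}.ncard + 1 = {v | R'.rel (Function.update R'.top s v) _}.ncard + 1
    simp only [he', habove]

theorem top_apply_eq_or_scEdge_of_adjacent {D : Set (Pref (∀ s, A s))} (s : Fin m)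
    {R R' : Pref (∀ t, A t)} (hRD : R ∈ D) (hR'D : R' ∈ D) (hR : TopSeparable R)
    (h : Adjacent R R') : R.top s = R'.top s ∨ scEdge (margDomain D s) (R.top s) (R'.top s) := by
  obtain ⟨X, Y, -, hr1, hr2, hr3, hr4⟩ := h
  by_cases hX : X = R.top
  · subst hX
    rw [R.rank_top] at hr1 hr2 hr3
    have hR'top : R'.top = Y := ((R'.rank_eq_one_iff).mp hr2).symm
    by_cases hYs : R.top s = Y s
    · exact Or.inl (by rw [hR'top, hYs])
    right
    have hY := hR.eq_update_top_of_rank_eq_two hr1 (Ne.symm hYs)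
    rw [hR'top]
    refine scEdge_of_swap_top hRD hR'D hYs (hR'top.trans hY) (hY ▸ hr1) hr3 fun w hwx hwy => ?_
    exact hr4 w (fun h => hwx (h ▸ rfl)) (fun h => hwy (h ▸ rfl))
  · left
    have hY : R.top ≠ Y := by
      intro h
      have := R.one_le_rank X
      rw [← h, R.rank_top] at hr1
      omega
    rw [(R'.rank_eq_one_iff).mp ((hr4 R.top (Ne.symm hX) hY).symm.trans R.rank_top)]

theorem top_apply_eq_or_scEdge_of_adjacentPlus {D : Set (Pref (∀ s, A s))} (s : Fin m)
    {R R' : Pref (∀ t, A t)} (hRD : R ∈ D) (hR'D : R' ∈ D) (h : AdjacentPlus R R') :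
    R.top s = R'.top s ∨ scEdge (margDomain D s) (R.top s) (R'.top s) := by
  obtain ⟨-, -, s', x, y, hxy, hswap, hrest⟩ := h
  by_cases hTy : R.top s' = y
  · have h := (hswap R.top).1
    rw [← hTy, Function.update_eq_self, R.rank_top] at h
    have := R.one_le_rank (Function.update R.top s' x)
    omega
  by_cases hTx : R.top s' = x
  · subst hTx
    obtain ⟨hR2, hR'1, hR'2⟩ := hswap R.top
    rw [Function.update_eq_self, R.rank_top] at hR2 hR'1 hR'2
    have hR'top : R'.top = Function.update R.top s' y := ((R'.rank_eq_one_iff).mp hR'1).symm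
    by_cases hs : s' = s
    · subst hs
      right
      rw [hR'top, Function.update_self]
      exact scEdge_of_swap_top hRD hR'D hxy hR'top hR2 hR'2 hrest
    · left
      rw [hR'top, Function.update_of_ne (Ne.symm hs)]
  · left
    rw [(R'.rank_eq_one_iff).mp ((hrest R.top hTx hTy).symm.trans R.rank_top)]

theorem top_apply_eq_or_scEdge_of_adjEdge {D : Set (Pref (∀ s, A s))} (s : Fin m)
    {R R' : Pref (∀ t, A t)} (hRD : R ∈ D) (hR'D : R' ∈ D) (hR : TopSeparable R)
    (h : AdjEdge R R') : R.top s = R'.top s ∨ scEdge (margDomain D s) (R.top s) (R'.top s) :=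
  h.elim (top_apply_eq_or_scEdge_of_adjacent s hRD hR'D hR)
    (top_apply_eq_or_scEdge_of_adjacentPlus s hRD hR'D)

end Step

theorem SimpleGraph.exists_walk_support_subset_of_isChain {V α : Type*} {G : SimpleGraph V}
    (f : α → V) {l : List α} {x y : α} (hhead : l.head? = some x) (hlast : l.getLast? = some y)
    (hl : l.IsChain fun u v => f u = f v ∨ G.Adj (f u) (f v)) :
    ∃ w : G.Walk (f x) (f y), w.support ⊆ l.map f := by
  induction l generalizing x with
  | nil => simp at hhead
  | cons u l ih =>
    obtain rfl : u = x := by simpa using hhead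
    cases l with
    | nil =>
      obtain rfl : u = y := by simpa using hlast
      exact ⟨.nil, by simp⟩
    | cons v l =>
      obtain ⟨w, hw⟩ := ih rfl (by rwa [List.getLast?_cons_cons] at hlast) hl.tail
      rcases List.isChain_cons_cons.mp hl |>.1 with heq | hadj
      · exact ⟨w.copy heq.symm rfl,
          by simpa using List.Subset.trans hw (List.subset_cons_self _ _)⟩
      · exact ⟨.cons hadj w, by simpa using List.cons_subset_cons _ hw⟩

theorem SimpleGraph.Walk.IsPath.support_isPath {V : Type*} {G : SimpleGraph V} {u v : V}
    {p : G.Walk u v} (hp : p.IsPath) (huv : u ≠ v) :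
    _root_.IsPath G.Adj Set.univ u v p.support := by
  refine ⟨?_, hp.support_nodup, ?_, ?_, fun _ _ => trivial, p.isChain_adj_support⟩
  · have : p.length ≠ 0 := fun h => huv (SimpleGraph.Walk.eq_of_length_eq_zero h)
    rw [SimpleGraph.Walk.length_support]
    omega
  · rw [List.head?_eq_some_head p.support_ne_nil, p.head_support]
  · rw [List.getLast?_eq_some_getLast p.support_ne_nil, p.getLast_support]

theorem forall_rel_of_not_hasRestoration {β : Type u} {l : List (Pref β)} {P P' : Pref β}
    {x y : β} (hxy : x ≠ y) (hhead : l.head? = some P) (hlast : l.getLast? = some P')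
    (hP : P.rel x y) (hP' : P'.rel x y) (hl : ¬ HasRestoration l y x) :
    ∀ R ∈ l, R.rel x y := by
  intro R hR
  by_contra hRxy
  have hRyx : R.rel y x := (R.total x y hxy).resolve_left hRxy
  obtain ⟨p, rfl⟩ := List.get_of_mem hR
  have hlen : 0 < l.length := List.length_pos_of_mem hR
  have h0 : l.get ⟨0, hlen⟩ = P := by
    simpa [List.head?_eq_getElem?, List.getElem?_eq_getElem hlen] using hhead
  have hn : l.get ⟨l.length - 1, by omega⟩ = P' := by
    rw [List.getLast?_eq_getElem?, List.getElem?_eq_getElem (by omega)] at hlast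
    exact Option.some.inj hlast
  have hp0 : p ≠ ⟨0, hlen⟩ := fun h => P.asymm _ _ hP (by rwa [← h0, ← h])
  have hpn : p ≠ ⟨l.length - 1, by omega⟩ := fun h =>
    P'.asymm _ _ hP' (by rwa [← hn, ← h])
  refine hl ⟨⟨0, hlen⟩, p, ⟨l.length - 1, by omega⟩, ?_, ?_,
    Or.inr ⟨h0 ▸ hP, hRyx, hn ▸ hP'⟩⟩
  · exact Fin.lt_def.mpr (Nat.pos_of_ne_zero fun h => hp0 (Fin.ext h))
  · exact Fin.lt_def.mpr (lt_of_le_of_ne (Nat.le_sub_one_of_lt p.isLt) fun h => hpn (Fin.ext h))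

theorem stmt_16_general {m : ℕ} {A : Fin m → Type u}
    [∀ s, Fintype (A s)] [∀ s, Nonempty (A s)]
    (D : Set (Pref (∀ s, A s)))
    (hrich : RichDomain D)
    (hts : ∀ P ∈ D, TopSeparable P)
    (s : Fin m) (a b c : A s) (hac : a ≠ c) (hbc : b ≠ c)
    (hb : ∀ l : List (A s),
      IsPath (scEdge (margDomain D s)) Set.univ a c l → b ∈ l) :
    ∀ Q ∈ margDomain D s, Pref.top Q = a → Q.rel b c := by
  classical
  obtain ⟨hmin, -, -, hext⟩ := hrich
  rintro _ ⟨P, hPD, rfl⟩ hPa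
  rw [Pref.marg_top] at hPa
  by_contra hbc'
  set B := Function.update P.top s b
  set C := Function.update P.top s c
  have hCB : P.rel C B := ((P.marg s).total b c hbc).resolve_left hbc'
  obtain ⟨P', hP'D, hP'C⟩ := hmin C
  have hCB' : C ≠ B := fun h => hbc (by simpa [B, C] using (congrFun h s).symm)
  obtain ⟨l, ⟨-, -, hhead, hlast, hlD, hchain⟩, hnr⟩ :=
    (hext P hPD P' hP'D fun h => hac (by simpa [← hPa, hP'C, C] using congrFun h s)).1 B C
  have hl : ∀ R ∈ l, R.rel C B :=
    forall_rel_of_not_hasRestoration hCB' hhead hlast hCB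
      (hP'C ▸ P'.top_spec B (hP'C ▸ hCB'.symm)) hnr
  have hnotb : ∀ R ∈ l, R.top s ≠ b := fun R hR hRb =>
    R.asymm _ _ (hl R hR) (hts R (hlD R hR) s B C
      ⟨by simpa [B, C] using hbc, fun t ht => by simp [B, C, ht]⟩ (by simp [B, hRb]))
  obtain ⟨w, hw⟩ := SimpleGraph.exists_walk_support_subset_of_isChain
    (G := scGraph (margDomain D s)) (fun R => R.top s) hhead hlast
    (List.IsChain.imp_of_mem_imp (fun R R' hR hR' =>
      top_apply_eq_or_scEdge_of_adjEdge s (hlD R hR) (hlD R' hR') (hts R (hlD R hR))) hchain)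
  have hP'c : P'.top s = c := by simp [hP'C, C]
  subst hPa hP'c
  obtain ⟨R, hR, hRb⟩ := List.mem_map.mp <|
    hw <| w.support_bypass_subset_support <| hb _ <| w.bypass_isPath.support_isPath hac
  exact hnotb R hR hRb

/-- if `b^s` lies on every path in `G_≈^{A^s}` connecting `a^s` and `c^s`,
then every induced marginal preference with top `a^s` ranks `b^s` above `c^s`. -/
theorem stmt_16 {m : ℕ} (hm : 2 ≤ m) {A : Fin m → Type u}
    [∀ s, Fintype (A s)] [∀ s, Nonempty (A s)]
    (hcard : ∀ s, 2 ≤ Fintype.card (A s))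
    (D : Set (Pref (∀ s, A s)))
    (hrich : RichDomain D)
    (hts : ∀ P ∈ D, TopSeparable P)
    (s : Fin m) (a b c : A s) (hac : a ≠ c) (hbc : b ≠ c)
    (hb : ∀ l : List (A s),
      IsPath (scEdge (margDomain D s)) Set.univ a c l → b ∈ l) :
    ∀ Q ∈ margDomain D s, Pref.top Q = a → Q.rel b c :=
  stmt_16_general D hrich hts s a b c hac hbc hb
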